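/- arXiv:1802.00888 — 2 statements merged into one kernel-verified Lean document; each statement's English description precedes it below -/
import Mathlib

section
/- The two series Σ_{i=0}^{∞} 1/((2i+1)(2i+5)(2i+3)²) and Σ_{i=1}^{∞} 1/((2i−1)²(2i+3)²) converge, and Σ_{i=0}^{∞} 1/((2i+1)(2i+5)(2i+3)²) + 2·Σ_{i=1}^{∞} 1/((2i−1)²(2i+3)²) = 1/9. -/
private lemma base_summable : Summable (fun i : ℕ => (1 : ℝ) / ((i : ℝ) + 1) ^ 2) := by
  have h : Summable (fun n : ℕ => (1 : ℝ) / (n : ℝ) ^ 2) :=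
    Real.summable_one_div_nat_pow.mpr (by norm_num)
  have := (summable_nat_add_iff 1).mpr h
  refine this.congr fun n => ?_
  push_cast
  ring_nf

/-- The two series `Σ_{i=0}^∞ 1/((2i+1)(2i+5)(2i+3)²)` and
`Σ_{i=1}^∞ 1/((2i−1)²(2i+3)²)` converge, and the first plus twice the second
equals `1/9`. -/
theorem series_identity_one_ninth :
    ∃ a b : ℝ,
      HasSum (fun i : ℕ =>
        (1 : ℝ) / ((2 * (i : ℝ) + 1) * (2 * (i : ℝ) + 5) * (2 * (i : ℝ) + 3) ^ 2)) a ∧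
      HasSum (fun i : ℕ =>
        (1 : ℝ) / ((2 * ((i : ℝ) + 1) - 1) ^ 2 * (2 * ((i : ℝ) + 1) + 3) ^ 2)) b ∧
      a + 2 * b = 1 / 9 := by
  set f : ℕ → ℝ := fun i =>
    (1 : ℝ) / ((2 * (i : ℝ) + 1) * (2 * (i : ℝ) + 5) * (2 * (i : ℝ) + 3) ^ 2) with hf_def
  set g : ℕ → ℝ := fun i =>
    (1 : ℝ) / ((2 * ((i : ℝ) + 1) - 1) ^ 2 * (2 * ((i : ℝ) + 1) + 3) ^ 2) with hg_def
  have hfs : Summable f := by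
    refine Summable.of_nonneg_of_le (fun i => by positivity) (fun i => ?_) base_summable
    apply one_div_le_one_div_of_le (by positivity)
    nlinarith [sq_nonneg ((i : ℝ)), Nat.cast_nonneg (α := ℝ) i]
  have hgs : Summable g := by
    refine Summable.of_nonneg_of_le (fun i => by positivity) (fun i => ?_) base_summable
    apply one_div_le_one_div_of_le (by positivity)
    nlinarith [sq_nonneg ((i : ℝ)), Nat.cast_nonneg (α := ℝ) i]
  refine ⟨∑' i, f i, ∑' i, g i, hfs.hasSum, hgs.hasSum, ?_⟩
  -- the combined series telescopes
  set D : ℕ → ℝ := fun i =>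
    (1 / 8) * (1 / (2 * (i : ℝ) + 1) ^ 2 - 1 / (2 * (i : ℝ) + 3) ^ 2) with hD_def
  have hstep : ∀ i : ℕ, f i + 2 * g i = D i - D (i + 1) := by
    intro i
    have h1 : (2 * (i : ℝ) + 1) ≠ 0 := by positivity
    have h3 : (2 * (i : ℝ) + 3) ≠ 0 := by positivity
    have h5 : (2 * (i : ℝ) + 5) ≠ 0 := by positivity
    have h1' : (2 * ((i : ℝ) + 1) - 1) ≠ 0 := by
      have : (2 * ((i : ℝ) + 1) - 1) = 2 * (i : ℝ) + 1 := by ring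
      rw [this]; positivity
    have h5' : (2 * ((i : ℝ) + 1) + 3) ≠ 0 := by positivity
    simp only [hf_def, hg_def, hD_def]
    push_cast
    field_simp
    ring
  have hsum : HasSum (fun i => f i + 2 * g i) (1 / 9) := by
    have hsummable : Summable (fun i => f i + 2 * g i) := hfs.add (hgs.mul_left 2)
    rw [hsummable.hasSum_iff_tendsto_nat]
    have hpart : ∀ n : ℕ, ∑ i ∈ Finset.range n, (f i + 2 * g i) = D 0 - D n := by
      intro n
      calc ∑ i ∈ Finset.range n, (f i + 2 * g i)
          = ∑ i ∈ Finset.range n, (D i - D (i + 1)) :=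
            Finset.sum_congr rfl fun i _ => hstep i
        _ = D 0 - D n := Finset.sum_range_sub' D n
    simp only [hpart]
    have hD0 : D 0 = 1 / 9 := by norm_num [hD_def]
    have hDlim : Filter.Tendsto D Filter.atTop (nhds 0) := by
      have hub : ∀ n : ℕ, D n ≤ 1 / ((n : ℝ) + 1) := by
        intro n
        have h1 : (0:ℝ) < 2 * (n : ℝ) + 1 := by positivity
        have : (1:ℝ) / (2 * (n : ℝ) + 1) ^ 2 ≤ 1 / ((n : ℝ) + 1) := by
          apply one_div_le_one_div_of_le (by positivity)
          nlinarith [sq_nonneg ((n:ℝ)), Nat.cast_nonneg (α := ℝ) n]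
        have h2 : (1:ℝ) / (2 * (n : ℝ) + 3) ^ 2 ≥ 0 := by positivity
        have h4 : (0:ℝ) ≤ 1 / ((n : ℝ) + 1) := by positivity
        simp only [hD_def]
        linarith
      have hlb : ∀ n : ℕ, 0 ≤ D n := by
        intro n
        have : (1:ℝ) / (2 * (n : ℝ) + 3) ^ 2 ≤ 1 / (2 * (n : ℝ) + 1) ^ 2 := by
          apply one_div_le_one_div_of_le (by positivity)
          nlinarith [Nat.cast_nonneg (α := ℝ) n]
        simp only [hD_def]
        linarith
      exact squeeze_zero hlb hub tendsto_one_div_add_atTop_nhds_zero_nat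
    rw [show (1:ℝ)/9 = D 0 - 0 by rw [hD0, sub_zero]]
    exact tendsto_const_nhds.sub hDlim
  have := (hfs.hasSum.add ((hgs.hasSum).mul_left 2)).unique hsum
  linarith [this]
end

section
/- Fix a probability space (Ω, 𝓕, 𝖯), an integer q ≥ 0, and a jointly independent family (ζ_j)_{0 ≤ j ≤ q} of standard Gaussian random variables. Then for any real coefficients C : {0,…,q}² → ℝ, the random variable X = Σ_{j_1=0}^{q} Σ_{j_2=0}^{q} C_{j_2 j_1} · (ζ_{j_1} ζ_{j_2} − 1_{j_1=j_2}) satisfies 𝖤[X²] = Σ_{j_1,j_2=0}^{q} C_{j_2 j_1}² + Σ_{j_1,j_2=0}^{q} C_{j_1 j_2} C_{j_2 j_1}. -/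
open MeasureTheory ProbabilityTheory Finset Real
open scoped NNReal

/-!
Write the variable as `∑_{a,b} C_{ba} Y_{ab}` with the Wick products `Y_{ab} = ζ_a ζ_b − 1_{a=b}`,
so that its second moment is `∑ C_{ba} C_{dc} 𝖤[Y_{ab} Y_{cd}]`. Isserlis' formula
`𝖤[ζ_a ζ_b ζ_c ζ_d] = δ_{ab} δ_{cd} + δ_{ac} δ_{bd} + δ_{ad} δ_{bc}` gives
`𝖤[Y_{ab} Y_{cd}] = δ_{ac} δ_{bd} + δ_{ad} δ_{bc}`; the first pairing contributes `∑ C_{ba}²`, the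
second `∑ C_{ab} C_{ba}`. Isserlis' formula itself comes from independence, which factors the
expectation into one-dimensional moments according to which of `a, b, c, d` coincide, and from the
standard Gaussian moments `1, 0, 1, 0, 3` of orders `0, …, 4`; the fourth moment is read off the
fourth derivative of the moment generating function `exp (t² / 2)` at `0`.
-/

section Pairings

variable {ι : Type*} [Fintype ι] [DecidableEq ι] {g : ℕ → ℝ}

lemma prod_comp_eq_prod_pow_card_filter {κ M : Type*} [Fintype κ] [CommMonoid M] (f : ι → M)
    (x : κ → ι) :
    ∏ k, f (x k) = ∏ i, f i ^ #{k | x k = i} := by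
  rw [← prod_fiberwise univ x]
  refine prod_congr rfl fun i _ ↦ ?_
  rw [prod_congr rfl fun k hk ↦ by rw [(mem_filter.1 hk).2], prod_const]

lemma prod_card_filter_pair (h0 : g 0 = 1) (h1 : g 1 = 0) (h2 : g 2 = 1) (a b : ι) :
    ∏ i, g #{k | ![a, b] k = i} = if a = b then 1 else 0 := by
  simp only [card_filter, Fin.sum_univ_two, Matrix.cons_val]
  rw [← prod_subset (subset_univ {a, b}) fun i _ hi ↦ by
    simp only [mem_insert, mem_singleton, not_or] at hi
    simp [Ne.symm, hi, h0]]
  by_cases hab : a = b <;> simp_all [prod_insert, eq_comm]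

lemma prod_card_filter_quadruple (h0 : g 0 = 1) (h1 : g 1 = 0) (h2 : g 2 = 1) (h3 : g 3 = 0)
    (h4 : g 4 = 3) (a b c d : ι) :
    ∏ i, g #{k | ![a, b, c, d] k = i} =
      (if a = b then 1 else 0) * (if c = d then 1 else 0)
        + (if a = c then 1 else 0) * (if b = d then 1 else 0)
        + (if a = d then 1 else 0) * (if b = c then 1 else 0) := by
  simp only [card_filter, Fin.sum_univ_four, Matrix.cons_val]
  rw [← prod_subset (subset_univ {a, b, c, d}) fun i _ hi ↦ by
    simp only [mem_insert, mem_singleton, not_or] at hi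
    simp [Ne.symm, hi, h0]]
  by_cases hab : a = b <;> by_cases hac : a = c <;> by_cases had : a = d <;>
    by_cases hbc : b = c <;> by_cases hbd : b = d <;> by_cases hcd : c = d <;>
    simp_all [prod_insert, eq_comm]
  norm_num

end Pairings

lemma hasDerivAt_mul_exp_mul_sq_div_two (v : ℝ) {p : ℝ → ℝ} {p' t : ℝ} (hp : HasDerivAt p p' t) :
    HasDerivAt (fun t ↦ p t * exp (v * t ^ 2 / 2))
      ((p' + v * t * p t) * exp (v * t ^ 2 / 2)) t := by
  have he : HasDerivAt (fun t ↦ exp (v * t ^ 2 / 2)) (exp (v * t ^ 2 / 2) * (v * t)) t :=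
    (((hasDerivAt_pow 2 t).const_mul v).div_const 2).exp.congr_deriv (by ring)
  exact (hp.fun_mul he).congr_deriv (by ring)

lemma iteratedDeriv_four_exp_mul_sq_div_two (v : ℝ) :
    iteratedDeriv 4 (fun t ↦ exp (v * t ^ 2 / 2)) 0 = 3 * v ^ 2 := by
  have step {p q : ℝ → ℝ} (hq : ∀ t, HasDerivAt p (q t - v * t * p t) t) :
      deriv (fun t ↦ p t * exp (v * t ^ 2 / 2)) = fun t ↦ q t * exp (v * t ^ 2 / 2) := by
    ext t
    exact (hasDerivAt_mul_exp_mul_sq_div_two v (hq t)).deriv.trans (by ring_nf)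
  have d1 := step (p := fun _ ↦ 1) (q := fun t ↦ v * t) fun t ↦
    (hasDerivAt_const t 1).congr_deriv (by ring)
  have d2 := step (p := fun t ↦ v * t) (q := fun t ↦ v + v ^ 2 * t ^ 2) fun t ↦
    ((hasDerivAt_id t).const_mul v).congr_deriv (by ring)
  have d3 := step (p := fun t ↦ v + v ^ 2 * t ^ 2) (q := fun t ↦ 3 * v ^ 2 * t + v ^ 3 * t ^ 3)
    fun t ↦ (((hasDerivAt_pow 2 t).const_mul (v ^ 2)).const_add v).congr_deriv (by ring)
  have d4 := step (p := fun t ↦ 3 * v ^ 2 * t + v ^ 3 * t ^ 3)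
    (q := fun t ↦ 3 * v ^ 2 + 6 * v ^ 3 * t ^ 2 + v ^ 4 * t ^ 4) fun t ↦
    (((hasDerivAt_id t).const_mul (3 * v ^ 2)).add
      ((hasDerivAt_pow 3 t).const_mul (v ^ 3))).congr_deriv (by ring)
  simp only [one_mul] at d1
  simp [iteratedDeriv_succ, d1, d2, d3, d4]

namespace ProbabilityTheory

lemma integral_pow_gaussianReal_of_odd (v : ℝ≥0) {n : ℕ} (hn : Odd n) :
    ∫ x, x ^ n ∂gaussianReal 0 v = 0 := by
  have h := integral_map (μ := gaussianReal 0 v) (φ := fun x ↦ -x)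
    (f := fun x ↦ x ^ n) (by fun_prop) (by fun_prop)
  rw [gaussianReal_map_neg, neg_zero] at h
  simp only [hn.neg_pow, integral_neg] at h
  linarith

lemma integral_sq_gaussianReal (v : ℝ≥0) : ∫ x, x ^ 2 ∂gaussianReal 0 v = v := by
  rw [← variance_fun_id_gaussianReal (μ := 0), variance_of_integral_eq_zero (by fun_prop)]
  simp

lemma integral_pow_four_gaussianReal (v : ℝ≥0) : ∫ x, x ^ 4 ∂gaussianReal 0 v = 3 * v ^ 2 := by
  have h : ∫ x, x ^ 4 ∂gaussianReal 0 v =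
      iteratedDeriv 4 (mgf (fun x ↦ x) (gaussianReal 0 v)) 0 := by
    rw [iteratedDeriv_mgf_zero] <;> simp
  simpa [h, mgf_fun_id_gaussianReal] using iteratedDeriv_four_exp_mul_sq_div_two v

lemma integrable_fun_prod_of_memLp {Ω : Type*} [MeasurableSpace Ω] {P : Measure Ω}
    [IsFiniteMeasure P] {n : ℕ} {f : Fin n → Ω → ℝ} (hf : ∀ k, MemLp (f k) n P) :
    Integrable (fun ω ↦ ∏ k, f k ω) P := by
  refine (MemLp.prod' fun k _ ↦ hf k).integrable ?_
  simp only [sum_const, card_univ, Fintype.card_fin, nsmul_eq_mul]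
  exact ENNReal.one_le_inv.2 (ENNReal.mul_inv_le_one _)

lemma integral_sq_sum_mul {Ω κ : Type*} [MeasurableSpace Ω] {P : Measure Ω} [Fintype κ]
    {Y : κ → Ω → ℝ} (hY : ∀ p r, Integrable (fun ω ↦ Y p ω * Y r ω) P) (c : κ → ℝ) :
    ∫ ω, (∑ p, c p * Y p ω) ^ 2 ∂P = ∑ p, ∑ r, c p * c r * ∫ ω, Y p ω * Y r ω ∂P := by
  have hterm : ∀ p r, Integrable (fun ω ↦ c p * Y p ω * (c r * Y r ω)) P := fun p r ↦ by
    simpa only [mul_mul_mul_comm] using (hY p r).const_mul (c p * c r)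
  simp only [sq, sum_mul_sum]
  rw [integral_finsetSum _ fun p _ ↦ integrable_finsetSum _ fun r _ ↦ hterm p r]
  refine sum_congr rfl fun p _ ↦ ?_
  rw [integral_finsetSum _ fun r _ ↦ hterm p r]
  refine sum_congr rfl fun r _ ↦ ?_
  rw [← integral_const_mul]
  exact integral_congr_ae (ae_of_all _ fun ω ↦ by ring)

section WickPair

variable {Ω ι : Type*} [DecidableEq ι] (ζ : ι → Ω → ℝ)

/-- The Wick product `:ζ_a ζ_b:` of two standard Gaussians. -/
def wickPair (a b : ι) (ω : Ω) : ℝ := ζ a ω * ζ b ω - if a = b then 1 else 0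

lemma wickPair_mul_wickPair (a b c d : ι) (ω : Ω) :
    wickPair ζ a b ω * wickPair ζ c d ω =
      ζ a ω * ζ b ω * ζ c ω * ζ d ω - (if c = d then 1 else 0) * (ζ a ω * ζ b ω)
        - (if a = b then 1 else 0) * (ζ c ω * ζ d ω)
        + (if a = b then 1 else 0) * (if c = d then 1 else 0) := by
  unfold wickPair
  ring

end WickPair

section IndependentFamily

variable {Ω ι : Type*} [MeasurableSpace Ω] {P : Measure Ω} {ζ : ι → Ω → ℝ}

lemma iIndepFun.integral_fun_prod_comp_eq_prod_moment [Fintype ι] [DecidableEq ι]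
    {μ : Measure ℝ} (hζ : iIndepFun ζ P) (hlaw : ∀ i, HasLaw (ζ i) μ P) {n : ℕ}
    (x : Fin n → ι) :
    ∫ ω, ∏ k, ζ (x k) ω ∂P = ∏ i, ∫ t, t ^ #{k | x k = i} ∂μ := by
  simp only [fun ω ↦ prod_comp_eq_prod_pow_card_filter (fun i ↦ ζ i ω) x]
  rw [hζ.integral_fun_prod_comp (f := fun i t ↦ t ^ #{k | x k = i})
    (fun i ↦ (hlaw i).aemeasurable) fun i ↦ by fun_prop]
  exact prod_congr rfl fun i _ ↦ (hlaw i).integral_comp (continuous_pow _).aestronglyMeasurable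

lemma integrable_fun_prod_comp_of_gaussianReal [IsFiniteMeasure P]
    (hlaw : ∀ i, HasLaw (ζ i) (gaussianReal 0 1) P) {n : ℕ} (x : Fin n → ι) :
    Integrable (fun ω ↦ ∏ k, ζ (x k) ω) P :=
  integrable_fun_prod_of_memLp fun k ↦
    (hlaw (x k)).hasGaussianLaw.memLp (ENNReal.natCast_ne_top n)

lemma integrable_wickPair_mul_wickPair [IsFiniteMeasure P] [DecidableEq ι]
    (hlaw : ∀ i, HasLaw (ζ i) (gaussianReal 0 1) P) (a b c d : ι) :
    Integrable (fun ω ↦ wickPair ζ a b ω * wickPair ζ c d ω) P := by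
  have h4 := integrable_fun_prod_comp_of_gaussianReal hlaw ![a, b, c, d]
  have hab := integrable_fun_prod_comp_of_gaussianReal hlaw ![a, b]
  have hcd := integrable_fun_prod_comp_of_gaussianReal hlaw ![c, d]
  simp only [Fin.prod_univ_four, Fin.prod_univ_two, Matrix.cons_val] at h4 hab hcd
  simp only [wickPair_mul_wickPair]
  fun_prop

variable [Fintype ι] [DecidableEq ι] (hζ : iIndepFun ζ P)
  (hlaw : ∀ i, HasLaw (ζ i) (gaussianReal 0 1) P)
include hζ hlaw

lemma iIndepFun.integral_mul_of_gaussianReal (a b : ι) :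
    ∫ ω, ζ a ω * ζ b ω ∂P = if a = b then 1 else 0 := by
  have h := hζ.integral_fun_prod_comp_eq_prod_moment hlaw ![a, b]
  simp only [Fin.prod_univ_two, Matrix.cons_val] at h
  rw [h]
  exact prod_card_filter_pair (g := fun n ↦ ∫ t, t ^ n ∂gaussianReal 0 1) (by simp)
    (integral_pow_gaussianReal_of_odd 1 odd_one) (by simpa using integral_sq_gaussianReal 1) a b

lemma iIndepFun.integral_mul_mul_mul_of_gaussianReal (a b c d : ι) :
    ∫ ω, ζ a ω * ζ b ω * ζ c ω * ζ d ω ∂P =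
      (if a = b then 1 else 0) * (if c = d then 1 else 0)
        + (if a = c then 1 else 0) * (if b = d then 1 else 0)
        + (if a = d then 1 else 0) * (if b = c then 1 else 0) := by
  have h := hζ.integral_fun_prod_comp_eq_prod_moment hlaw ![a, b, c, d]
  simp only [Fin.prod_univ_four, Matrix.cons_val] at h
  rw [h]
  exact prod_card_filter_quadruple (g := fun n ↦ ∫ t, t ^ n ∂gaussianReal 0 1) (by simp)
    (integral_pow_gaussianReal_of_odd 1 odd_one) (by simpa using integral_sq_gaussianReal 1)
    (integral_pow_gaussianReal_of_odd 1 ⟨1, rfl⟩) (by simpa using integral_pow_four_gaussianReal 1)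
    a b c d

variable [IsProbabilityMeasure P]

lemma integral_wickPair_mul_wickPair (a b c d : ι) :
    ∫ ω, wickPair ζ a b ω * wickPair ζ c d ω ∂P =
      (if a = c then 1 else 0) * (if b = d then 1 else 0)
        + (if a = d then 1 else 0) * (if b = c then 1 else 0) := by
  have h4 := integrable_fun_prod_comp_of_gaussianReal hlaw ![a, b, c, d]
  have hab := integrable_fun_prod_comp_of_gaussianReal hlaw ![a, b]
  have hcd := integrable_fun_prod_comp_of_gaussianReal hlaw ![c, d]
  simp only [Fin.prod_univ_four, Fin.prod_univ_two, Matrix.cons_val] at h4 hab hcd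
  simp only [wickPair_mul_wickPair]
  rw [integral_add, integral_sub, integral_sub, integral_const_mul, integral_const_mul,
    integral_const, hζ.integral_mul_mul_mul_of_gaussianReal hlaw,
    hζ.integral_mul_of_gaussianReal hlaw, hζ.integral_mul_of_gaussianReal hlaw]
  · simp only [probReal_univ, one_smul]
    ring
  all_goals fun_prop

end IndependentFamily

end ProbabilityTheory

/-- Second moment of the approximation of a double iterated Itô integral with equal
Wiener indices: for jointly independent standard Gaussians `ζ_0, …, ζ_q`, the variable
`X = Σ_{j₁,j₂} C j₂ j₁ (ζ_{j₁} ζ_{j₂} − 1_{j₁=j₂})` satisfies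
`𝖤[X²] = Σ (C j₂ j₁)² + Σ C j₁ j₂ · C j₂ j₁`. -/
theorem second_moment_double_equal_indices
    {Ω : Type*} [MeasurableSpace Ω] (P : Measure Ω) [IsProbabilityMeasure P]
    (q : ℕ) (ζ : Fin (q + 1) → Ω → ℝ)
    (hmeas : ∀ j, Measurable (ζ j))
    (hindep : iIndepFun ζ P)
    (hgauss : ∀ j, Measure.map (ζ j) P = gaussianReal 0 1)
    (C : Fin (q + 1) → Fin (q + 1) → ℝ) :
    ∫ ω, (∑ j₁ : Fin (q + 1), ∑ j₂ : Fin (q + 1),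
        C j₂ j₁ * (ζ j₁ ω * ζ j₂ ω - if j₁ = j₂ then 1 else 0)) ^ 2 ∂P
      = (∑ j₁ : Fin (q + 1), ∑ j₂ : Fin (q + 1), (C j₂ j₁) ^ 2)
        + ∑ j₁ : Fin (q + 1), ∑ j₂ : Fin (q + 1), C j₁ j₂ * C j₂ j₁ := by
  have hlaw j : HasLaw (ζ j) (gaussianReal 0 1) P := ⟨(hmeas j).aemeasurable, hgauss j⟩
  have hpairs ω : ∑ j₁, ∑ j₂, C j₂ j₁ * (ζ j₁ ω * ζ j₂ ω - if j₁ = j₂ then 1 else 0)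
      = ∑ p : Fin (q + 1) × Fin (q + 1), C p.2 p.1 * wickPair ζ p.1 p.2 ω :=
    (Fintype.sum_prod_type' _).symm
  simp only [hpairs]
  rw [integral_sq_sum_mul (fun p r ↦ integrable_wickPair_mul_wickPair hlaw p.1 p.2 r.1 r.2)]
  simp only [integral_wickPair_mul_wickPair hindep hlaw, Fintype.sum_prod_type, mul_add, mul_ite,
    mul_one, mul_zero, sum_add_distrib, sum_ite_irrel, sum_const_zero, sum_ite_eq, mem_univ,
    if_true, sq]
  congr 1
  exact sum_congr rfl fun _ _ ↦ sum_congr rfl fun _ _ ↦ mul_comm _ _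
end
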